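/- Let X be a binary random variable and Y a random variable on a finite alphabet, and let 0 < \delta < 1/2. If the Bhattacharyya parameter satisfies Z(X|Y) \geq 1 - \delta, then the conditional entropy satisfies H(X|Y) \geq 1 - 2\delta. -/

import Mathlib

/-!
With `t = 1 - 2q`, the binary entropy in nats is `h(q) = log 2 - φ(t)/2` where
`φ(t) = (1+t) log(1+t) + (1-t) log(1-t) = ∑_{k ≥ 1} t^{2k} / (k (2k-1))`. The series has
nonnegative coefficients, so `φ(t)/t²` increases towards `φ(1) = 2 log 2`; this is Topsøe's bound
`h(q) ≥ 4 log 2 · q(1-q)`. Applied fibrewise it gives `H(X|Y) ≥ ∑_y P(y) Z_y²` with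
`Z_y = 2√(q_y(1-q_y))`, and Cauchy–Schwarz turns this into `Z(X|Y)² ≤ H(X|Y)`.
Finally `1 - 2δ ≤ 2Z - 1 ≤ Z²`.
-/

open Real Filter Set

lemma hasSum_one_add_mul_log_add_one_sub_mul_log {t : ℝ} (ht : |t| < 1) :
    HasSum (fun k : ℕ => 1 / ((k + 1) * (2 * k + 1)) * (t ^ 2) ^ (k + 1))
      ((1 + t) * log (1 + t) + (1 - t) * log (1 - t)) := by
  have ht2 : |t ^ 2| < 1 := by
    rw [abs_pow]; exact pow_lt_one₀ (abs_nonneg t) ht two_ne_zero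
  have hlog : log (1 - t ^ 2) = log (1 + t) + log (1 - t) := by
    rw [← log_mul (by linarith [neg_abs_le t]) (by linarith [le_abs_self t])]; ring_nf
  have hterm : (fun k : ℕ => 1 / ((k + 1) * (2 * k + 1)) * (t ^ 2) ^ (k + 1)) =
      fun k : ℕ => t * (2 * (1 / (2 * k + 1)) * t ^ (2 * k + 1)) - (t ^ 2) ^ (k + 1) / (k + 1) := by
    funext k
    field_simp
    ring
  rw [hterm, show (1 + t) * log (1 + t) + (1 - t) * log (1 - t) =
    t * (log (1 + t) - log (1 - t)) - -log (1 - t ^ 2) by rw [hlog]; ring]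
  exact ((hasSum_log_sub_log_of_abs_lt_one ht).mul_left t).sub
    (hasSum_pow_div_log_of_abs_lt_one ht2)

/-- Nonnegative coefficients make `f t / t²` monotone in `|t|`; let the comparison point tend
to `1`. -/
lemma le_mul_sq_of_hasSum_mul_sq_pow {f : ℝ → ℝ} {a : ℕ → ℝ} (ha : ∀ k, 0 ≤ a k)
    (hf : ∀ t, |t| < 1 → HasSum (fun k => a k * (t ^ 2) ^ (k + 1)) (f t))
    (hf1 : ContinuousWithinAt f (Iio 1) 1) {t : ℝ} (ht : |t| < 1) : f t ≤ f 1 * t ^ 2 := by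
  have hmono : ∀ s ∈ Ioo |t| 1, f t * s ^ 2 ≤ f s * t ^ 2 := by
    rintro s ⟨hts, hs1⟩
    have hs : |s| < 1 := by rwa [abs_of_pos ((abs_nonneg t).trans_lt hts)]
    have hsq : t ^ 2 ≤ s ^ 2 :=
      sq_le_sq' (by linarith [neg_abs_le t]) (by linarith [le_abs_self t])
    refine hasSum_le (fun k => ?_) ((hf t ht).mul_right (s ^ 2)) ((hf s hs).mul_right (t ^ 2))
    have hk : 0 ≤ a k * t ^ 2 * s ^ 2 := by positivity [ha k]
    calc a k * (t ^ 2) ^ (k + 1) * s ^ 2 = a k * t ^ 2 * s ^ 2 * (t ^ 2) ^ k := by ring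
      _ ≤ a k * t ^ 2 * s ^ 2 * (s ^ 2) ^ k := by gcongr
      _ = a k * (s ^ 2) ^ (k + 1) * t ^ 2 := by ring
  have hlim : f t * 1 ^ 2 ≤ f 1 * t ^ 2 :=
    le_of_tendsto_of_tendsto
      ((continuous_const.mul (continuous_pow 2)).tendsto 1 |>.mono_left nhdsWithin_le_nhds)
      (hf1.tendsto.mul_const _) (mem_of_superset (Ioo_mem_nhdsLT ht) hmono)
  simpa using hlim

lemma one_add_mul_log_add_one_sub_mul_log_le {t : ℝ} (ht : |t| < 1) :
    (1 + t) * log (1 + t) + (1 - t) * log (1 - t) ≤ 2 * log 2 * t ^ 2 := by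
  have hcont : Continuous fun t : ℝ => (1 + t) * log (1 + t) + (1 - t) * log (1 - t) :=
    (continuous_mul_log.comp (continuous_const.add continuous_id)).add
      (continuous_mul_log.comp (continuous_const.sub continuous_id))
  have h := le_mul_sq_of_hasSum_mul_sq_pow (fun k => by positivity)
    (fun t ht => hasSum_one_add_mul_log_add_one_sub_mul_log ht) hcont.continuousWithinAt ht
  norm_num at h
  linarith

theorem four_mul_log_two_mul_le_binEntropy {p : ℝ} (hp0 : 0 ≤ p) (hp1 : p ≤ 1) :
    4 * log 2 * (p * (1 - p)) ≤ binEntropy p := by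
  rcases hp0.eq_or_lt with rfl | hp0
  · simp
  rcases hp1.eq_or_lt with rfl | hp1
  · simp
  have h := one_add_mul_log_add_one_sub_mul_log_le (t := 1 - 2 * p)
    (abs_lt.mpr ⟨by linarith, by linarith⟩)
  rw [show 1 + (1 - 2 * p) = 2 * (1 - p) by ring, show 1 - (1 - 2 * p) = 2 * p by ring,
    log_mul two_ne_zero (by linarith), log_mul two_ne_zero hp0.ne'] at h
  rw [binEntropy, log_inv, log_inv]
  linarith

lemma four_mul_mul_div_le_neg_mul_logb_add {a b : ℝ} (ha : 0 ≤ a) (hb : 0 ≤ b) :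
    4 * (a * b) / (a + b) ≤ -(a * logb 2 (a / (a + b)) + b * logb 2 (b / (a + b))) := by
  rcases (add_nonneg ha hb).eq_or_lt with hs | hs
  · simp [← hs]
  set q := a / (a + b) with hq
  have ha_eq : a = (a + b) * q := by rw [hq]; field_simp
  have hbq : b / (a + b) = 1 - q := by rw [hq]; field_simp; ring
  have hb_eq : b = (a + b) * (1 - q) := by rw [← hbq]; field_simp
  have hent := four_mul_log_two_mul_le_binEntropy (p := q) (by positivity)
    (div_le_one_of_le₀ (by linarith) hs.le)
  have hlhs : 4 * (a * b) / (a + b) = (a + b) * (4 * (q * (1 - q))) := by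
    rw [← hbq, hq]; field_simp
  have hrhs : -(a * logb 2 (a / (a + b)) + b * logb 2 (b / (a + b))) =
      (a + b) * binEntropy q / log 2 :=
    calc -(a * logb 2 (a / (a + b)) + b * logb 2 (b / (a + b)))
        = -((a + b) * q * logb 2 q + (a + b) * (1 - q) * logb 2 (1 - q)) := by
          rw [← ha_eq, ← hb_eq, hbq]
      _ = (a + b) * binEntropy q / log 2 := by
          rw [binEntropy, log_inv, log_inv, logb, logb]; ring
  rw [hlhs, hrhs, le_div_iff₀ (log_pos one_lt_two)]
  linarith [mul_le_mul_of_nonneg_left hent hs.le]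

section BinaryInput

variable {Y : Type*} [Fintype Y]

-- `p x y` stands for `P_{X,Y}(x, y)`; the two definitions are `Z(X|Y)` and `H(X|Y)` in bits.
noncomputable def bhattacharyya (p : Fin 2 → Y → ℝ) : ℝ :=
  2 * ∑ y, √(p 0 y * p 1 y)

noncomputable def condEntropy (p : Fin 2 → Y → ℝ) : ℝ :=
  -∑ x, ∑ y, p x y * logb 2 (p x y / ∑ x', p x' y)

theorem sq_bhattacharyya_le_condEntropy (p : Fin 2 → Y → ℝ) (hp : ∀ x y, 0 ≤ p x y)
    (hsum : ∑ x, ∑ y, p x y = 1) : bhattacharyya p ^ 2 ≤ condEntropy p := by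
  set H : Y → ℝ := fun y => -(p 0 y * logb 2 (p 0 y / (p 0 y + p 1 y)) +
    p 1 y * logb 2 (p 1 y / (p 0 y + p 1 y)))
  have hH : condEntropy p = ∑ y, H y := by
    simp only [condEntropy, H, Fin.sum_univ_two, Finset.sum_neg_distrib, Finset.sum_add_distrib]
  have hmass : ∑ y, (p 0 y + p 1 y) = 1 := by
    rwa [Finset.sum_add_distrib, ← Fin.sum_univ_two (f := fun x => ∑ y, p x y)]
  have hmass_nonneg (y : Y) : 0 ≤ p 0 y + p 1 y := add_nonneg (hp 0 y) (hp 1 y)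
  have hbound (y : Y) := four_mul_mul_div_le_neg_mul_logb_add (hp 0 y) (hp 1 y)
  have hH_nonneg (y : Y) : 0 ≤ H y :=
    (div_nonneg (by have := hp 0 y; have := hp 1 y; positivity) (hmass_nonneg y)).trans
      (hbound y)
  have hfibre (y : Y) : (2 * √(p 0 y * p 1 y)) ^ 2 ≤ (p 0 y + p 1 y) * H y := by
    have hzero : p 0 y + p 1 y = 0 → 4 * (p 0 y * p 1 y) = 0 := fun h => by
      rw [((add_eq_zero_iff_of_nonneg (hp 0 y) (hp 1 y)).1 h).1, zero_mul, mul_zero]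
    calc (2 * √(p 0 y * p 1 y)) ^ 2
        = (p 0 y + p 1 y) * (4 * (p 0 y * p 1 y) / (p 0 y + p 1 y)) := by
          rw [mul_div_cancel_of_imp' hzero, mul_pow, sq_sqrt (mul_nonneg (hp 0 y) (hp 1 y))]
          norm_num
      _ ≤ (p 0 y + p 1 y) * H y := mul_le_mul_of_nonneg_left (hbound y) (hmass_nonneg y)
  calc bhattacharyya p ^ 2 = (∑ y, 2 * √(p 0 y * p 1 y)) ^ 2 := by
        rw [bhattacharyya, Finset.mul_sum]
    _ ≤ (∑ y, (p 0 y + p 1 y)) * ∑ y, H y :=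
        Finset.sum_sq_le_sum_mul_sum_of_sq_le_mul _ (fun y _ => hmass_nonneg y)
          (fun y _ => hH_nonneg y) (fun y _ => hfibre y)
    _ = condEntropy p := by rw [hmass, one_mul, hH]

end BinaryInput

theorem condEntropy_ge_of_bhattacharyya_ge_general {Y : Type*} [Fintype Y]
    (p : Fin 2 → Y → ℝ) (hp : ∀ x y, 0 ≤ p x y)
    (hsum : ∑ x, ∑ y, p x y = 1)
    (δ : ℝ)
    (hZ : 1 - δ ≤ 2 * ∑ y, Real.sqrt (p 0 y * p 1 y)) :
    1 - 2 * δ ≤ -∑ x, ∑ y, p x y * Real.logb 2 (p x y / ∑ x', p x' y) := by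
  have hZ : 1 - δ ≤ bhattacharyya p := hZ
  calc 1 - 2 * δ ≤ 2 * bhattacharyya p - 1 := by linarith
    _ ≤ bhattacharyya p ^ 2 := by nlinarith [sq_nonneg (bhattacharyya p - 1)]
    _ ≤ condEntropy p := sq_bhattacharyya_le_condEntropy p hp hsum

/-- For binary `X` and finite-alphabet `Y`, if the Bhattacharyya parameter satisfies
`Z(X|Y) ≥ 1 - δ` for some `0 < δ < 1/2`, then `H(X|Y) ≥ 1 - 2δ` (entropy in bits). -/
theorem condEntropy_ge_of_bhattacharyya_ge {Y : Type*} [Fintype Y]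
    (p : Fin 2 → Y → ℝ) (hp : ∀ x y, 0 ≤ p x y)
    (hsum : ∑ x, ∑ y, p x y = 1)
    (δ : ℝ) (hδ0 : 0 < δ) (hδ1 : δ < 1/2)
    (hZ : 1 - δ ≤ 2 * ∑ y, Real.sqrt (p 0 y * p 1 y)) :
    1 - 2 * δ ≤ -∑ x, ∑ y, p x y * Real.logb 2 (p x y / ∑ x', p x' y) :=
  condEntropy_ge_of_bhattacharyya_ge_general p hp hsum δ hZ
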